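/- arXiv:2504.12519 — 5 statements merged into one kernel-verified Lean document; each statement's English description precedes it below -/
import Mathlib

section
/- Assume U_Σ < 1. If the sequence (V_t) is bounded, then the sequence (L_t) is bounded; moreover, if V_t → 0 as t → ∞, then L_t → 0 as t → ∞. -/
/-!
With `W t = 2 * lossSeq U V t`, splitting each chain at its last point `t_m = s + 1` gives the
renewal equation `W t = V (t + 1) + ∑_{s < t} U (t - s) * W s`. The kernel has total mass
`u = U_Σ < 1`, so by strong induction `W ≤ sup V / (1 - u)`. If moreover `V t → 0`, an eventual
bound `B` on `W` improves to `u * B + δ`: the contribution of any fixed finite stretch of the past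
dies out because `U t → 0`. Iterating drives the eventual bound to `0`.
-/

open Filter Topology
open scoped Classical

/-- The propagator expansion of the loss:
`L_t = (1/2)·(V_{t+1} + Σ_{m=1}^{t} Σ_{0<t_1<⋯<t_m<t+1}
  U_{t+1−t_m}·U_{t_m−t_{m−1}}⋯U_{t_2−t_1}·V_{t_1})`.
Strictly increasing tuples `(t_1,…,t_m)` of length `m+1` (here the length parameter `m`
runs over `Finset.range t`, representing tuple length `m+1 ∈ {1,…,t}`) are encoded as
strictly monotone maps `τ : Fin (m+1) → Fin (t+1)` with `0 < τ 0`. -/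
noncomputable def lossSeq (U V : ℕ → ℝ) (t : ℕ) : ℝ :=
  (1 / 2) * (V (t + 1) +
    ∑ m ∈ Finset.range t,
      ∑ τ ∈ Finset.univ.filter
          (fun τ : Fin (m + 1) → Fin (t + 1) => StrictMono τ ∧ 0 < (τ 0 : ℕ)),
        U ((t + 1) - (τ (Fin.last m) : ℕ)) *
          (∏ j : Fin m, U ((τ j.succ : ℕ) - (τ j.castSucc : ℕ))) * V (τ 0))

open Finset

namespace LossSeq

def chains (n m : ℕ) : Finset (Fin (m + 1) → ℕ) :=
  (Fintype.piFinset fun _ => range (n + 1)).filter fun f => StrictMono f ∧ 0 < f 0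

noncomputable def chainWeight (U V : ℕ → ℝ) (n : ℕ) {m : ℕ} (f : Fin (m + 1) → ℕ) : ℝ :=
  U (n + 1 - f (Fin.last m)) * (∏ j : Fin m, U (f j.succ - f j.castSucc)) * V (f 0)

/-- The `m`-th inner sum of `lossSeq U V n`, over chains taken `ℕ`-valued so that chains below
different bounds `n` live in one type and can be split at their last point. -/
noncomputable def chainSum (U V : ℕ → ℝ) (n m : ℕ) : ℝ :=
  ∑ f ∈ chains n m, chainWeight U V n f

variable {U V : ℕ → ℝ} {n m : ℕ}

theorem mem_chains {f : Fin (m + 1) → ℕ} :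
    f ∈ chains n m ↔ StrictMono f ∧ 0 < f 0 ∧ f (Fin.last m) ≤ n := by
  simp only [chains, mem_filter, Fintype.mem_piFinset, mem_range, Nat.lt_succ_iff]
  constructor
  · rintro ⟨hle, hf, h0⟩
    exact ⟨hf, h0, hle _⟩
  · rintro ⟨hf, h0, hle⟩
    exact ⟨fun k => (hf.monotone (Fin.le_last k)).trans hle, hf, h0⟩

theorem chains_eq_empty (h : n ≤ m) : chains n m = ∅ := by
  refine eq_empty_of_forall_notMem fun f hf => ?_
  obtain ⟨hf, h0, hle⟩ := mem_chains.mp hf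
  have hmaps : Set.MapsTo f (univ : Finset (Fin (m + 1))) (Icc 1 n) := fun k _ =>
    mem_Icc.mpr ⟨h0.trans_le (hf.monotone (Fin.zero_le k)), (hf.monotone (Fin.le_last k)).trans hle⟩
  have := card_le_card_of_injOn f hmaps hf.injective.injOn
  simp only [card_univ, Fintype.card_fin, Nat.card_Icc] at this
  omega

theorem chainSum_zero : chainSum U V n 0 = ∑ s ∈ range n, U (n - s) * V (s + 1) := by
  refine sum_nbij' (fun f => f 0 - 1) (fun s _ => s + 1) ?_ ?_ ?_ ?_ ?_
  · intro f hf
    obtain ⟨-, h0, hle⟩ := mem_chains.mp hf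
    simp only [Fin.last_zero] at hle
    simp only [mem_range]
    omega
  · intro s hs
    simp only [mem_range] at hs
    exact mem_chains.mpr ⟨Fin.strictMono_iff_lt_succ.mpr finZeroElim, Nat.succ_pos s, hs⟩
  · intro f hf
    obtain ⟨-, h0, -⟩ := mem_chains.mp hf
    funext k
    rw [Fin.fin_one_eq_zero k]
    omega
  · intro s _
    simp
  · intro f hf
    obtain ⟨-, h0, -⟩ := mem_chains.mp hf
    simp only [chainWeight, Fin.last_zero, univ_eq_empty, prod_empty, mul_one]
    congr 2 <;> omega

theorem snoc_mem_chains {s : ℕ} {g : Fin (m + 1) → ℕ} (hs : s < n) (hg : g ∈ chains s m) :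
    (Fin.snoc g (s + 1) : Fin (m + 2) → ℕ) ∈ chains n (m + 1) := by
  obtain ⟨hg, h0, hle⟩ := mem_chains.mp hg
  refine mem_chains.mpr ⟨?_, ?_, by simpa using hs⟩
  · refine Fin.strictMono_iff_lt_succ.mpr fun i => ?_
    induction i using Fin.lastCases with
    | last => simpa using Nat.lt_succ_of_le hle
    | cast i =>
      rw [Fin.succ_castSucc, Fin.snoc_castSucc, Fin.snoc_castSucc]
      exact hg Fin.castSucc_lt_succ
  · rw [← Fin.castSucc_zero, Fin.snoc_castSucc]
    exact h0

theorem init_mem_chains {f : Fin (m + 2) → ℕ} (hf : f ∈ chains n (m + 1)) :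
    Fin.init f ∈ chains (f (Fin.last (m + 1)) - 1) m := by
  obtain ⟨hf, h0, -⟩ := mem_chains.mp hf
  refine mem_chains.mpr ⟨hf.comp Fin.strictMono_castSucc, h0, ?_⟩
  have := hf (Fin.castSucc_lt_last (Fin.last m))
  simp only [Fin.init]
  omega

theorem chainWeight_snoc {s : ℕ} (g : Fin (m + 1) → ℕ) :
    chainWeight U V n (Fin.snoc g (s + 1) : Fin (m + 2) → ℕ) = U (n - s) * chainWeight U V s g := by
  have h0 : (Fin.snoc g (s + 1) : Fin (m + 2) → ℕ) 0 = g 0 := by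
    rw [← Fin.castSucc_zero, Fin.snoc_castSucc]
  simp only [chainWeight, Fin.prod_univ_castSucc, Fin.snoc_castSucc, Fin.succ_castSucc,
    Fin.succ_last, Fin.snoc_last, h0, Nat.add_sub_add_right]
  ring

theorem chainSum_succ :
    chainSum U V n (m + 1) = ∑ s ∈ range n, U (n - s) * chainSum U V s m := by
  simp only [chainSum, mul_sum, ← chainWeight_snoc]
  rw [sum_sigma']
  have hlast : ∀ f ∈ chains n (m + 1), 1 ≤ f (Fin.last (m + 1)) := fun f hf =>
    (mem_chains.mp hf).2.1.trans_le ((mem_chains.mp hf).1.monotone (Fin.zero_le _))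
  refine sum_nbij' (fun f => ⟨f (Fin.last (m + 1)) - 1, Fin.init f⟩)
    (fun x => Fin.snoc x.2 (x.1 + 1)) ?_ ?_ ?_ ?_ ?_
  · intro f hf
    have := hlast f hf
    have hle := (mem_chains.mp hf).2.2
    exact mem_sigma.mpr ⟨mem_range.mpr (by dsimp only; omega), init_mem_chains hf⟩
  · rintro ⟨s, g⟩ hx
    obtain ⟨hs, hg⟩ := mem_sigma.mp hx
    exact snoc_mem_chains (mem_range.mp hs) hg
  · intro f hf
    dsimp only
    rw [Nat.sub_add_cancel (hlast f hf), Fin.snoc_init_self]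
  · rintro ⟨s, g⟩ -
    simp
  · intro f hf
    dsimp only
    rw [Nat.sub_add_cancel (hlast f hf), Fin.snoc_init_self]

theorem sum_chainSum_eq :
    ∑ m ∈ range n, chainSum U V n m
      = ∑ s ∈ range n, U (n - s) * (V (s + 1) + ∑ m ∈ range s, chainSum U V s m) := by
  cases n with
  | zero => simp
  | succ n =>
    have extend : ∀ s ∈ range (n + 1),
        ∑ m ∈ range n, chainSum U V s m = ∑ m ∈ range s, chainSum U V s m := by
      intro s hs
      refine (sum_subset (range_subset_range.mpr (by simpa [Nat.lt_succ_iff] using hs))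
        fun m _ hm => ?_).symm
      rw [chainSum, chains_eq_empty (by simpa using hm), sum_empty]
    rw [sum_range_succ' (chainSum U V (n + 1))]
    simp only [chainSum_succ, chainSum_zero]
    rw [sum_comm]
    simp only [← mul_sum]
    rw [← sum_add_distrib]
    refine sum_congr rfl fun s hs => ?_
    rw [extend s hs]
    ring

theorem lossSeq_eq_chainSum (t : ℕ) :
    lossSeq U V t = (1 / 2) * (V (t + 1) + ∑ m ∈ range t, chainSum U V t m) := by
  refine congrArg _ (congrArg _ (sum_congr rfl fun m _ => ?_))
  have val_ofNat : ∀ f ∈ chains t m, ∀ k, (Fin.ofNat (t + 1) (f k) : ℕ) = f k := by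
    intro f hf k
    obtain ⟨hf, -, hle⟩ := mem_chains.mp hf
    exact Nat.mod_eq_of_lt (Nat.lt_succ_of_le ((hf.monotone (Fin.le_last k)).trans hle))
  refine sum_nbij' (fun τ k => (τ k : ℕ)) (fun f k => Fin.ofNat (t + 1) (f k)) ?_ ?_ ?_ ?_ ?_
  · intro τ hτ
    obtain ⟨hτ, h0⟩ := (mem_filter.mp hτ).2
    exact mem_chains.mpr ⟨fun a b hab => hτ hab, h0, Nat.lt_succ_iff.mp (τ _).isLt⟩
  · intro f hf
    obtain ⟨hf', h0, -⟩ := mem_chains.mp hf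
    refine mem_filter.mpr ⟨mem_univ _, fun a b hab => ?_, ?_⟩
    · exact Fin.lt_def.mpr (by rw [val_ofNat f hf, val_ofNat f hf]; exact hf' hab)
    · rwa [val_ofNat f hf]
  · intro τ _
    funext k
    simp
  · intro f hf
    funext k
    exact val_ofNat f hf k
  · intro τ _
    rfl

theorem two_mul_lossSeq (t : ℕ) :
    2 * lossSeq U V t = V (t + 1) + ∑ s ∈ range t, U (t - s) * (2 * lossSeq U V s) := by
  have two_mul_eq : ∀ s, 2 * lossSeq U V s = V (s + 1) + ∑ m ∈ range s, chainSum U V s m :=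
    fun s => by rw [lossSeq_eq_chainSum]; ring
  rw [two_mul_eq, sum_chainSum_eq]
  simp only [two_mul_eq]

end LossSeq

section Renewal

variable {U f W : ℕ → ℝ} {u : ℝ}

theorem renewal_nonneg (hU : ∀ t, 1 ≤ t → 0 ≤ U t) (hf : ∀ t, 0 ≤ f t)
    (hW : ∀ t, W t = f t + ∑ s ∈ range t, U (t - s) * W s) (t : ℕ) : 0 ≤ W t := by
  induction t using Nat.strong_induction_on with
  | _ t ih =>
    rw [hW t]
    refine add_nonneg (hf t) (sum_nonneg fun s hs => ?_)
    have hst := mem_range.mp hs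
    exact mul_nonneg (hU _ (by omega)) (ih s hst)

theorem renewal_sum_le_mul (hU : ∀ t, 1 ≤ t → 0 ≤ U t)
    (hUu : ∀ t, ∑ s ∈ range t, U (t - s) ≤ u) {t : ℕ} {S : Finset ℕ} (hS : S ⊆ range t)
    {B : ℝ} (hB : 0 ≤ B) (hWB : ∀ s ∈ S, W s ≤ B) :
    ∑ s ∈ S, U (t - s) * W s ≤ u * B := by
  have hUt : ∀ s ∈ range t, 0 ≤ U (t - s) := fun s hs => hU _ (by simp at hs; omega)
  calc ∑ s ∈ S, U (t - s) * W s ≤ ∑ s ∈ S, U (t - s) * B :=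
        sum_le_sum fun s hs => mul_le_mul_of_nonneg_left (hWB s hs) (hUt s (hS hs))
    _ ≤ ∑ s ∈ range t, U (t - s) * B :=
        sum_le_sum_of_subset_of_nonneg hS fun s hs _ => mul_nonneg (hUt s hs) hB
    _ ≤ u * B := by
        rw [← sum_mul]
        exact mul_le_mul_of_nonneg_right (hUu t) hB

theorem renewal_le_div (hU : ∀ t, 1 ≤ t → 0 ≤ U t) (hUu : ∀ t, ∑ s ∈ range t, U (t - s) ≤ u)
    (hu : u < 1) (hW : ∀ t, W t = f t + ∑ s ∈ range t, U (t - s) * W s)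
    {C : ℝ} (hC : 0 ≤ C) (hfC : ∀ t, f t ≤ C) (t : ℕ) : W t ≤ C / (1 - u) := by
  induction t using Nat.strong_induction_on with
  | _ t ih =>
    have hpast := renewal_sum_le_mul hU hUu subset_rfl
      (div_nonneg hC (sub_nonneg.mpr hu.le)) fun s hs => ih s (mem_range.mp hs)
    calc W t ≤ C + u * (C / (1 - u)) := by rw [hW t]; linarith [hfC t]
      _ = C / (1 - u) := by field_simp [(sub_pos.mpr hu).ne']; ring

theorem renewal_eventually_le (hU : ∀ t, 1 ≤ t → 0 ≤ U t)
    (hUu : ∀ t, ∑ s ∈ range t, U (t - s) ≤ u)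
    (hW : ∀ t, W t = f t + ∑ s ∈ range t, U (t - s) * W s)
    (hUlim : Tendsto U atTop (𝓝 0)) (hf : Tendsto f atTop (𝓝 0))
    {B δ : ℝ} (hB : 0 ≤ B) (hδ : 0 < δ) (hWB : ∀ᶠ t in atTop, W t ≤ B) :
    ∀ᶠ t in atTop, W t ≤ u * B + δ := by
  obtain ⟨T, hT⟩ := eventually_atTop.mp hWB
  have hhead : Tendsto (fun t => f t + ∑ s ∈ range T, U (t - s) * W s) atTop (𝓝 0) := by
    simpa using hf.add (tendsto_finsetSum (range T) fun s _ =>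
      (hUlim.comp (tendsto_sub_atTop_nat s)).mul_const (W s))
  filter_upwards [hhead.eventually (gt_mem_nhds hδ), eventually_ge_atTop T] with t hsmall hTt
  have htail := renewal_sum_le_mul hU hUu (S := Ico T t)
    (fun s hs => mem_range.mpr (mem_Ico.mp hs).2) hB fun s hs => hT s (mem_Ico.mp hs).1
  rw [hW t, ← sum_range_add_sum_Ico _ hTt]
  linarith

theorem renewal_tendsto_zero (hU : ∀ t, 1 ≤ t → 0 ≤ U t)
    (hUu : ∀ t, ∑ s ∈ range t, U (t - s) ≤ u) (hu : u < 1)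
    (hW : ∀ t, W t = f t + ∑ s ∈ range t, U (t - s) * W s)
    (hUlim : Tendsto U atTop (𝓝 0)) (hf0 : ∀ t, 0 ≤ f t) (hf : Tendsto f atTop (𝓝 0)) :
    Tendsto W atTop (𝓝 0) := by
  have hu0 : 0 ≤ u := (hU 1 le_rfl).trans (by simpa using hUu 1)
  obtain ⟨C, hC⟩ := hf.bddAbove_range
  have hC0 : 0 ≤ C := (hf0 0).trans (hC ⟨0, rfl⟩)
  set M := C / (1 - u)
  have hWM : ∀ t, W t ≤ M := renewal_le_div hU hUu hu hW hC0 fun t => hC ⟨t, rfl⟩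
  have contract : ∀ k : ℕ, ∀ ε > 0, ∀ᶠ t in atTop, W t ≤ u ^ k * M + ε := by
    intro k
    induction k with
    | zero => exact fun ε hε => Eventually.of_forall fun t => by linarith [hWM t, pow_zero u]
    | succ k ih =>
      intro ε hε
      filter_upwards [renewal_eventually_le hU hUu hW hUlim hf (by positivity)
        (mul_pos (sub_pos.mpr hu) hε) (ih ε hε)] with t ht
      exact ht.trans_eq (by ring)
  have hpow : Tendsto (fun k => u ^ k * M) atTop (𝓝 0) := by
    simpa using (tendsto_pow_atTop_nhds_zero_of_lt_one hu0 hu).mul_const M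
  refine tendsto_order.2 ⟨fun a ha => Eventually.of_forall fun t =>
    ha.trans_le (renewal_nonneg hU hf0 hW t), fun ε hε => ?_⟩
  obtain ⟨k, hk⟩ := (hpow.eventually (gt_mem_nhds (half_pos hε))).exists
  filter_upwards [contract k (ε / 2) (half_pos hε)] with t ht
  linarith

end Renewal

theorem summable_and_tsum_lt_one_of_tsum_ofReal_lt_one {α : Type*} {g : α → ℝ}
    (hg : ∀ a, 0 ≤ g a) (h : ∑' a, ENNReal.ofReal (g a) < 1) : Summable g ∧ ∑' a, g a < 1 := by
  have hcoe : (fun a => (ENNReal.ofReal (g a)).toReal) = g :=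
    funext fun a => ENNReal.toReal_ofReal (hg a)
  refine ⟨hcoe ▸ ENNReal.summable_toReal h.ne_top, ?_⟩
  rw [← hcoe, ← ENNReal.tsum_toReal_eq fun _ => ENNReal.ofReal_ne_top]
  exact ENNReal.toReal_lt_of_lt_ofReal (by simpa using h)

theorem sum_range_sub_le_tsum {U : ℕ → ℝ} (hU : ∀ t, 1 ≤ t → 0 ≤ U t)
    (hsum : Summable fun k => U (k + 1)) (t : ℕ) :
    ∑ s ∈ range t, U (t - s) ≤ ∑' k, U (k + 1) := by
  have hreflect : ∑ s ∈ range t, U (t - s) = ∑ k ∈ range t, U (k + 1) := by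
    rw [← sum_range_reflect (fun k => U (k + 1)) t]
    refine sum_congr rfl fun s hs => congrArg U ?_
    have := mem_range.mp hs
    omega
  rw [hreflect]
  exact hsum.sum_le_tsum _ fun k _ => hU _ (Nat.succ_pos k)

/-- Assume `U_Σ < 1`. If `(V_t)` is bounded then `(L_t)` is bounded; moreover if
`V_t → 0` then `L_t → 0`. -/
theorem stmt0 (U V : ℕ → ℝ)
    (hU : ∀ t, 1 ≤ t → 0 ≤ U t) (hV : ∀ t, 1 ≤ t → 0 ≤ V t)
    (hUsum : ∑' t : ℕ, ENNReal.ofReal (U (t + 1)) < 1) :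
    ((∃ C : ℝ, ∀ t, 1 ≤ t → V t ≤ C) → ∃ C' : ℝ, ∀ t : ℕ, lossSeq U V t ≤ C') ∧
    (Tendsto V atTop (𝓝 0) → Tendsto (lossSeq U V) atTop (𝓝 0)) := by
  obtain ⟨hsum, hu⟩ :=
    summable_and_tsum_lt_one_of_tsum_ofReal_lt_one (fun k => hU (k + 1) k.succ_pos) hUsum
  have hUu := sum_range_sub_le_tsum hU hsum
  have hW := LossSeq.two_mul_lossSeq (U := U) (V := V)
  constructor
  · rintro ⟨C, hC⟩
    have hC0 : 0 ≤ C := (hV 1 le_rfl).trans (hC 1 le_rfl)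
    refine ⟨C / (1 - ∑' k, U (k + 1)) / 2, fun t => ?_⟩
    have := renewal_le_div hU hUu hu hW hC0 (fun t => hC (t + 1) t.succ_pos) t
    linarith
  · intro hV0
    have hUlim : Tendsto U atTop (𝓝 0) :=
      (tendsto_add_atTop_iff_nat 1).mp hsum.tendsto_atTop_zero
    have hW0 := renewal_tendsto_zero hU hUu hu hW hUlim (fun t => hV (t + 1) t.succ_pos)
      ((tendsto_add_atTop_iff_nat 1).mpr hV0)
    simpa using hW0.div_const 2
end

section
/- Assume U_Σ > 1 (possibly U_Σ = ∞) and that V_t > 0 for at least one index t ≥ 1. Then sup_{t≥0} L_t = ∞. -/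
open Filter Topology
open scoped Classical

/-! Fix `t₀` with `V t₀ > 0` and `N` with `S = U 1 + ⋯ + U N > 1`. A composition `d` with
`m + 1` parts in `[1, N]` is the gap sequence of the chain `t₀ < t₀ + d₀ < t₀ + d₀ + d₁ < ⋯`,
which contributes `(∏ U (dᵢ)) · V t₀` to `2 L_t` for `t + 1 = t₀ + ∑ d`; distinct compositions
give distinct chains. Summing over the `t₀ + (m + 1) N` possible `t` yields
`V t₀ · S ^ (m + 1) ≤ ∑_t 2 L_t`, so a bound `L_t ≤ C` would make `S ^ (m + 1)` grow at most
linearly in `m`. -/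

open Finset

lemma Fin.partialSum_last {M : Type*} [AddCommMonoid M] {n : ℕ} (f : Fin n → M) :
    Fin.partialSum f (Fin.last n) = ∑ i, f i := by
  simp [Fin.partialSum, List.take_of_length_le, List.sum_ofFn]

lemma Fin.strictMono_partialSum {M : Type*} [AddMonoid M] [Preorder M] [AddLeftStrictMono M]
    {n : ℕ} {f : Fin n → M} (hf : ∀ i, 0 < f i) : StrictMono (Fin.partialSum f) :=
  Fin.strictMono_iff_lt_succ.2 fun i => by
    rw [Fin.partialSum_succ]
    exact lt_add_of_pos_right _ (hf i)

section Chains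

variable {U V : ℕ → ℝ} {t m : ℕ}

def chains (t m : ℕ) : Finset (Fin (m + 1) → Fin (t + 1)) :=
  univ.filter fun τ => StrictMono τ ∧ 0 < (τ 0 : ℕ)

def chainWeight (U V : ℕ → ℝ) (τ : Fin (m + 1) → Fin (t + 1)) : ℝ :=
  U ((t + 1) - (τ (Fin.last m) : ℕ)) *
    (∏ j : Fin m, U ((τ j.succ : ℕ) - (τ j.castSucc : ℕ))) * V (τ 0)

lemma two_mul_lossSeq (U V : ℕ → ℝ) (t : ℕ) :
    2 * lossSeq U V t =
      V (t + 1) + ∑ m ∈ range t, ∑ τ ∈ chains t m, chainWeight U V τ := by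
  simp only [lossSeq, chains, chainWeight]
  ring

lemma chainWeight_nonneg (hU : ∀ t, 1 ≤ t → 0 ≤ U t) (hV : ∀ t, 1 ≤ t → 0 ≤ V t)
    {τ : Fin (m + 1) → Fin (t + 1)} (hτ : τ ∈ chains t m) : 0 ≤ chainWeight U V τ := by
  obtain ⟨-, hmono, hpos⟩ := mem_filter.1 hτ
  have hlast := (τ (Fin.last m)).isLt
  refine mul_nonneg (mul_nonneg (hU _ (by omega)) (prod_nonneg fun j _ => hU _ ?_)) (hV _ hpos)
  have : (τ j.castSucc : ℕ) < τ j.succ := hmono Fin.castSucc_lt_succ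
  omega

lemma lossSeq_nonneg (hU : ∀ t, 1 ≤ t → 0 ≤ U t) (hV : ∀ t, 1 ≤ t → 0 ≤ V t) (t : ℕ) :
    0 ≤ lossSeq U V t := by
  have := two_mul_lossSeq U V t
  have : 0 ≤ ∑ m ∈ range t, ∑ τ ∈ chains t m, chainWeight U V τ :=
    sum_nonneg fun m _ => sum_nonneg fun τ hτ => chainWeight_nonneg hU hV hτ
  linarith [hV (t + 1) (by omega)]

lemma sum_chainWeight_le_two_mul_lossSeq (hU : ∀ t, 1 ≤ t → 0 ≤ U t)
    (hV : ∀ t, 1 ≤ t → 0 ≤ V t) (hm : m < t) {P : Finset (Fin (m + 1) → Fin (t + 1))}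
    (hP : P ⊆ chains t m) : ∑ τ ∈ P, chainWeight U V τ ≤ 2 * lossSeq U V t := by
  have hnonneg : ∀ m, 0 ≤ ∑ τ ∈ chains t m, chainWeight U V τ :=
    fun m => sum_nonneg fun τ hτ => chainWeight_nonneg hU hV hτ
  calc ∑ τ ∈ P, chainWeight U V τ ≤ ∑ τ ∈ chains t m, chainWeight U V τ :=
        sum_le_sum_of_subset_of_nonneg hP fun τ hτ _ => chainWeight_nonneg hU hV hτ
    _ ≤ ∑ m ∈ range t, ∑ τ ∈ chains t m, chainWeight U V τ :=
        single_le_sum (fun m _ => hnonneg m) (mem_range.2 hm)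
    _ ≤ 2 * lossSeq U V t := by
        rw [two_mul_lossSeq]
        linarith [hV (t + 1) (by omega)]

end Chains

section Compositions

variable {t₀ t m : ℕ} {d : Fin (m + 1) → ℕ}

/-- The clamp only serves to land in `Fin (t + 1)`: it does nothing once the parts of `d` are
positive and `t₀ + ∑ d = t + 1`. -/
def compositionChain (t₀ t : ℕ) (d : Fin (m + 1) → ℕ) : Fin (m + 1) → Fin (t + 1) :=
  fun j => Fin.clamp (t₀ + Fin.partialSum d j.castSucc) t

lemma val_compositionChain (hd : ∀ i, 0 < d i) (hsum : t₀ + ∑ i, d i = t + 1)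
    (j : Fin (m + 1)) :
    (compositionChain t₀ t d j : ℕ) = t₀ + Fin.partialSum d j.castSucc := by
  have h := Fin.strictMono_partialSum hd (Fin.castSucc_lt_last j)
  rw [Fin.partialSum_last] at h
  simp only [compositionChain, Fin.coe_clamp]
  omega

lemma compositionChain_succ_sub_castSucc (hd : ∀ i, 0 < d i)
    (hsum : t₀ + ∑ i, d i = t + 1) (j : Fin m) :
    (compositionChain t₀ t d j.succ : ℕ) - compositionChain t₀ t d j.castSucc = d j.castSucc := by
  rw [val_compositionChain hd hsum, val_compositionChain hd hsum, ← Fin.succ_castSucc,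
    Fin.partialSum_succ]
  omega

lemma sub_compositionChain_last (hd : ∀ i, 0 < d i) (hsum : t₀ + ∑ i, d i = t + 1) :
    t + 1 - (compositionChain t₀ t d (Fin.last m) : ℕ) = d (Fin.last m) := by
  rw [val_compositionChain hd hsum, ← hsum, ← Fin.partialSum_last, ← Fin.succ_last,
    Fin.partialSum_succ]
  omega

lemma compositionChain_mem_chains (ht₀ : 1 ≤ t₀) (hd : ∀ i, 0 < d i)
    (hsum : t₀ + ∑ i, d i = t + 1) : compositionChain t₀ t d ∈ chains t m := by
  refine mem_filter.2 ⟨mem_univ _, fun i j hij => ?_, ?_⟩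
  · rw [Fin.lt_def, val_compositionChain hd hsum, val_compositionChain hd hsum]
    have := Fin.strictMono_partialSum hd (Fin.castSucc_lt_castSucc_iff.2 hij)
    omega
  · rw [val_compositionChain hd hsum]
    omega

lemma chainWeight_compositionChain {U V : ℕ → ℝ} (hd : ∀ i, 0 < d i)
    (hsum : t₀ + ∑ i, d i = t + 1) :
    chainWeight U V (compositionChain t₀ t d) = (∏ i, U (d i)) * V t₀ := by
  have h0 : (compositionChain t₀ t d 0 : ℕ) = t₀ := by
    simp [val_compositionChain hd hsum]
  simp only [chainWeight, sub_compositionChain_last hd hsum,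
    compositionChain_succ_sub_castSucc hd hsum, h0, Fin.prod_univ_castSucc (fun i => U (d i))]
  ring

lemma injOn_compositionChain :
    Set.InjOn (compositionChain (m := m) t₀ t) {d | (∀ i, 0 < d i) ∧ t₀ + ∑ i, d i = t + 1} := by
  rintro d ⟨hd, hsum⟩ e ⟨he, hsum'⟩ hde
  funext i
  induction i using Fin.lastCases with
  | last =>
    rw [← sub_compositionChain_last hd hsum, ← sub_compositionChain_last he hsum', hde]
  | cast j =>
    rw [← compositionChain_succ_sub_castSucc hd hsum, ← compositionChain_succ_sub_castSucc he hsum',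
      hde]

end Compositions

section LowerBound

variable {U V : ℕ → ℝ}

lemma mul_sum_prod_le_two_mul_lossSeq (hU : ∀ t, 1 ≤ t → 0 ≤ U t)
    (hV : ∀ t, 1 ≤ t → 0 ≤ V t) {t₀ t m : ℕ} (ht₀ : 1 ≤ t₀) {D : Finset (Fin (m + 1) → ℕ)}
    (hD : ∀ d ∈ D, (∀ i, 0 < d i) ∧ t₀ + ∑ i, d i = t + 1) :
    V t₀ * ∑ d ∈ D, ∏ i, U (d i) ≤ 2 * lossSeq U V t := by
  obtain rfl | ⟨d, hdD⟩ := D.eq_empty_or_nonempty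
  · simpa using lossSeq_nonneg hU hV t
  have hm : m < t := by
    obtain ⟨hd, hsum⟩ := hD d hdD
    have : ∑ _i : Fin (m + 1), 1 ≤ ∑ i, d i := sum_le_sum fun i _ => hd i
    simp only [sum_const, card_univ, Fintype.card_fin, smul_eq_mul, mul_one] at this
    omega
  calc V t₀ * ∑ d ∈ D, ∏ i, U (d i)
      = ∑ d ∈ D, chainWeight U V (compositionChain t₀ t d) := by
        rw [mul_sum]
        refine sum_congr rfl fun d hd => ?_
        rw [chainWeight_compositionChain (hD d hd).1 (hD d hd).2, mul_comm]
    _ = ∑ τ ∈ D.image (compositionChain t₀ t), chainWeight U V τ :=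
        (sum_image fun d hd e he => injOn_compositionChain (hD d hd) (hD e he)).symm
    _ ≤ 2 * lossSeq U V t :=
        sum_chainWeight_le_two_mul_lossSeq hU hV hm <| image_subset_iff.2 fun d hd =>
          compositionChain_mem_chains ht₀ (hD d hd).1 (hD d hd).2

lemma mul_pow_le_sum_lossSeq (hU : ∀ t, 1 ≤ t → 0 ≤ U t) (hV : ∀ t, 1 ≤ t → 0 ≤ V t)
    {t₀ : ℕ} (ht₀ : 1 ≤ t₀) (N m : ℕ) :
    V t₀ * (∑ x ∈ Icc 1 N, U x) ^ (m + 1) ≤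
      ∑ t ∈ range (t₀ + (m + 1) * N), 2 * lossSeq U V t := by
  set D := Fintype.piFinset fun _ : Fin (m + 1) => Icc 1 N
  have hparts : ∀ d ∈ D, (∀ i, 0 < d i) ∧ ∑ i, d i ≤ (m + 1) * N := by
    intro d hd
    simp only [D, Fintype.mem_piFinset, mem_Icc] at hd
    refine ⟨fun i => (hd i).1, ?_⟩
    simpa using sum_le_card_nsmul univ d N fun i _ => (hd i).2
  have hmaps : ∀ d ∈ D, t₀ + ∑ i, d i - 1 ∈ range (t₀ + (m + 1) * N) := by
    intro d hd
    have := (hparts d hd).2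
    rw [mem_range]
    omega
  calc V t₀ * (∑ x ∈ Icc 1 N, U x) ^ (m + 1) = V t₀ * ∑ d ∈ D, ∏ i, U (d i) := by
        rw [← prod_univ_sum, Fin.prod_const]
    _ = ∑ t ∈ range (t₀ + (m + 1) * N),
          V t₀ * ∑ d ∈ D with t₀ + ∑ i, d i - 1 = t, ∏ i, U (d i) := by
        rw [← sum_fiberwise_of_maps_to hmaps, mul_sum]
    _ ≤ ∑ t ∈ range (t₀ + (m + 1) * N), 2 * lossSeq U V t := by
        refine sum_le_sum fun t _ => mul_sum_prod_le_two_mul_lossSeq hU hV ht₀ fun d hd => ?_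
        obtain ⟨hdD, rfl⟩ := mem_filter.1 hd
        exact ⟨(hparts d hdD).1, by omega⟩

end LowerBound

lemma exists_one_lt_sum_Icc {f : ℕ → ℝ} (hf : ∀ t, 1 ≤ t → 0 ≤ f t)
    (h : 1 < ∑' t, ENNReal.ofReal (f (t + 1))) : ∃ N, 1 < ∑ x ∈ Icc 1 N, f x := by
  rw [ENNReal.tsum_eq_iSup_nat, lt_iSup_iff] at h
  obtain ⟨N, hN⟩ := h
  rw [← ENNReal.ofReal_sum_of_nonneg fun i _ => hf (i + 1) (by omega), ENNReal.one_lt_ofReal,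
    range_eq_Ico, sum_Ico_add' f 0 N 1, zero_add, Ico_add_one_right_eq_Icc] at hN
  exact ⟨N, hN⟩

lemma eventually_add_mul_lt_mul_pow {S c : ℝ} (hS : 1 < S) (hc : 0 < c) (a b : ℝ) :
    ∀ᶠ n : ℕ in atTop, a + b * n < c * S ^ n := by
  have hlim : Tendsto (fun n : ℕ => a * S⁻¹ ^ n + b * ((n : ℝ) ^ 1 / S ^ n)) atTop (𝓝 0) := by
    simpa using
      ((tendsto_pow_atTop_nhds_zero_of_lt_one (by positivity) (inv_lt_one_of_one_lt₀ hS)).const_mul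
        a).add ((tendsto_pow_const_div_const_pow_of_one_lt 1 hS).const_mul b)
  filter_upwards [(tendsto_order.1 hlim).2 c hc] with n hn
  rw [← div_lt_iff₀ (by positivity)]
  convert hn using 1
  rw [inv_pow]
  ring

/-- If `U_Σ > 1` (possibly `∞`) and `V_t > 0` for at least one `t ≥ 1`,
then `sup_t L_t = ∞`, i.e. the loss sequence is unbounded. -/
theorem stmt1 (U V : ℕ → ℝ)
    (hU : ∀ t, 1 ≤ t → 0 ≤ U t) (hV : ∀ t, 1 ≤ t → 0 ≤ V t)
    (hUsum : 1 < ∑' t : ℕ, ENNReal.ofReal (U (t + 1)))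
    (hVpos : ∃ t, 1 ≤ t ∧ 0 < V t) :
    ∀ C : ℝ, ∃ t : ℕ, C < lossSeq U V t := by
  obtain ⟨t₀, ht₀, hVt₀⟩ := hVpos
  obtain ⟨N, hS⟩ := exists_one_lt_sum_Icc hU hUsum
  by_contra! ⟨C, hC⟩
  obtain ⟨m, hm⟩ := ((tendsto_add_atTop_nat 1).eventually
    (eventually_add_mul_lt_mul_pow hS hVt₀ (t₀ * (2 * C)) (N * (2 * C)))).exists
  have hsum_le : ∑ t ∈ range (t₀ + (m + 1) * N), 2 * lossSeq U V t ≤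
      ((t₀ + (m + 1) * N : ℕ) : ℝ) * (2 * C) := by
    have := sum_le_card_nsmul (range (t₀ + (m + 1) * N)) _ _ fun t _ =>
      mul_le_mul_of_nonneg_left (hC t) zero_le_two
    rwa [card_range, nsmul_eq_mul] at this
  have := mul_pow_le_sum_lossSeq hU hV ht₀ N m
  push_cast at hm hsum_le
  linarith
end

section
/- The rational functions P/Q and Ψ^{(M)} coincide: P(μ)/Q(μ) = Ψ^{(M)}(μ) for every μ ∈ ℂ at which both sides are defined (i.e., outside the finitely many zeros of the respective denominators). -/
/-!
`S_λ` is a diagonal matrix bordered by one row and one column, so the Schur complement gives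
`det(μ − S_λ) = ∏ (μ − d_m) · (μ − 1 + λα − λ Σ_m c_m / (μ − d_m))` away from the poles, hence
`P/Q = (μ − 1) / (Σ_m c_m / (μ − d_m) − α)`. Writing `e_m = e^{−(m+1/2)h}`,
`g_m = e^{−(2−θ)(m+1/2)h}` and `K = A⁻¹(2−θ)h`, we have `d_m = 1 − e_m`,
`c_m = K g_m (e_m − 1)` and, by the geometric series, `α = K Σ_m g_m`. Since
`e_m − 1 = (μ − 1 + e_m) − μ`, the denominator collapses to `−Kμ Σ_m g_m / (μ − 1 + e_m)`.
-/

open Filter Topology Matrix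

/-- The `(M+1)×(M+1)` transition matrix `S_λ` whose first row is `(1−λα, bᵀ)`
and whose remaining `M` rows form the block `(λc, D)`. -/
noncomputable def Smat {M : ℕ} (D : Matrix (Fin M) (Fin M) ℝ) (b c : Fin M → ℝ)
    (α lam : ℝ) : Matrix (Fin (M + 1)) (Fin (M + 1)) ℝ :=
  Matrix.of fun i j =>
    Fin.cases
      (Fin.cases (1 - lam * α) (fun j' => b j') j)
      (fun i' => Fin.cases (lam * c i') (fun j' => D i' j') j) i

open Finset Polynomial

section Bordered

variable {R : Type*} {n : ℕ}

def bordered (a : R) (u v : Fin n → R) (B : Matrix (Fin n) (Fin n) R) :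
    Matrix (Fin (n + 1)) (Fin (n + 1)) R :=
  of fun i j => Fin.cases (Fin.cases a u j) (fun i' => Fin.cases (v i') (B i') j) i

def finOneSumEquiv (n : ℕ) : Fin 1 ⊕ Fin n ≃ Fin (n + 1) :=
  finSumFinEquiv.trans (finCongr (add_comm 1 n))

@[simp]
theorem finOneSumEquiv_inl (i : Fin 1) : finOneSumEquiv n (Sum.inl i) = 0 := by
  ext; simp [finOneSumEquiv]

@[simp]
theorem finOneSumEquiv_inr (i : Fin n) : finOneSumEquiv n (Sum.inr i) = i.succ := by
  ext; simp [finOneSumEquiv, Fin.val_succ]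

theorem bordered_submatrix_finOneSumEquiv (a : R) (u v : Fin n → R)
    (B : Matrix (Fin n) (Fin n) R) :
    (bordered a u v B).submatrix (finOneSumEquiv n) (finOneSumEquiv n) =
      fromBlocks (of fun _ _ : Fin 1 => a) (of fun _ j => u j)
        (of fun i _ => v i) B := by
  ext (i | i) (j | j) <;> simp [bordered]

theorem det_bordered_diagonal {K : Type*} [Field K] (a : K) (u v d : Fin n → K)
    (hd : ∀ m, d m ≠ 0) :
    (bordered a u v (diagonal d)).det = (∏ m, d m) * (a - ∑ m, u m * v m / d m) := by
  have : Invertible (diagonal d) := invertibleOfIsUnitDet _ <| by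
    simpa [det_diagonal, isUnit_iff_ne_zero, prod_ne_zero_iff]
  have hinv : ⅟(diagonal d) = diagonal fun m => (d m)⁻¹ :=
    invOf_eq_right_inv (by simp [diagonal_mul_diagonal, mul_inv_cancel₀ (hd _)])
  rw [← det_submatrix_equiv_self (finOneSumEquiv n), bordered_submatrix_finOneSumEquiv,
    det_fromBlocks₂₂, hinv, det_diagonal, det_fin_one]
  simp [mul_apply, diagonal_apply, div_eq_mul_inv, mul_right_comm]

theorem aeval_charpoly_bordered_diagonal [CommRing R] {K : Type*} [Field K] [Algebra R K]
    (a : R) (u v d : Fin n → R) (μ : K) (hd : ∀ m, μ - algebraMap R K (d m) ≠ 0) :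
    aeval μ (bordered a u v (diagonal d)).charpoly =
      (∏ m, (μ - algebraMap R K (d m))) * (μ - algebraMap R K a -
        ∑ m, algebraMap R K (u m) * algebraMap R K (v m) / (μ - algebraMap R K (d m))) := by
  have hmat : scalar _ μ - (bordered a u v (diagonal d)).map (algebraMap R K) =
      bordered (μ - algebraMap R K a) (fun j => -algebraMap R K (u j))
        (fun i => -algebraMap R K (v i)) (diagonal fun m => μ - algebraMap R K (d m)) := by
    ext i j
    cases i using Fin.cases <;> cases j using Fin.cases <;>
      simp [bordered, diagonal_apply, (Fin.succ_ne_zero _).symm]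
    split_ifs <;> simp
  rw [aeval_def, eval₂_eq_eval_map, ← charpoly_map, eval_charpoly, hmat,
    det_bordered_diagonal _ _ _ _ hd]
  simp

end Bordered

theorem Smat_eq_bordered {M : ℕ} (D : Matrix (Fin M) (Fin M) ℝ) (b c : Fin M → ℝ) (α lam : ℝ) :
    Smat D b c α lam = bordered (1 - lam * α) b (lam • c) D :=
  rfl

theorem aeval_charpoly_Smat_diagonal {M : ℕ} (d b c : Fin M → ℝ) (α lam : ℝ) (μ : ℂ)
    (hd : ∀ m, μ - d m ≠ 0) :
    aeval μ (Smat (diagonal d) b c α lam).charpoly =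
      (∏ m, (μ - d m)) * (μ - 1 + lam * α - lam * ∑ m, b m * c m / (μ - d m)) := by
  rw [Smat_eq_bordered, aeval_charpoly_bordered_diagonal _ _ _ _ _ hd, mul_sum]
  simp only [Complex.coe_algebraMap, Pi.smul_apply, smul_eq_mul]
  push_cast
  ring_nf

theorem sum_range_exp_midpoint (a h : ℝ) (hah : a * h ≠ 0) (M : ℕ) :
    ∑ m ∈ range M, Real.exp (-(a * ((m : ℝ) + 1/2) * h)) =
      (1 - Real.exp (-(a * M * h))) / (1 - Real.exp (-(a * h))) * Real.exp (-(a * h / 2)) := by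
  have hr : Real.exp (-(a * h)) ≠ 1 := by simpa using hah
  have hterm : ∀ m : ℕ, Real.exp (-(a * ((m : ℝ) + 1/2) * h)) =
      Real.exp (-(a * h)) ^ m * Real.exp (-(a * h / 2)) := fun m => by
    rw [← Real.exp_nat_mul, ← Real.exp_add]; congr 1; ring
  rw [sum_congr rfl fun m _ => hterm m, ← sum_mul, geom_sum_eq hr, ← Real.exp_nat_mul,
    ← neg_div_neg_eq, neg_sub, neg_sub]
  ring_nf

theorem sum_mul_sub_one_div_sub_mul_sum {F : Type*} [Field F] (K μ : F) (g e : ℕ → F) (M : ℕ)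
    (he : ∀ m ∈ range M, μ - 1 + e m ≠ 0) :
    ∑ m ∈ range M, K * g m * (e m - 1) / (μ - 1 + e m) - K * ∑ m ∈ range M, g m =
      -(K * μ * ∑ m ∈ range M, g m / (μ - 1 + e m)) := by
  rw [mul_sum, mul_sum, ← sum_sub_distrib, ← sum_neg_distrib]
  refine sum_congr rfl fun m hm => ?_
  field_simp [he m hm]
  ring

theorem aeval_charpoly_Smat_diagonal_div {M : ℕ} (d b c : Fin M → ℝ) (α : ℝ) (μ : ℂ)
    (hd : ∀ m, μ - d m ≠ 0) :
    aeval μ (Smat (diagonal d) b c α 0).charpoly /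
        aeval μ ((Smat (diagonal d) b c α 0).charpoly - (Smat (diagonal d) b c α 1).charpoly) =
      (μ - 1) / (∑ m, b m * c m / (μ - d m) - α) := by
  have hprod : ∏ m, (μ - d m) ≠ 0 := prod_ne_zero_iff.2 fun m _ => hd m
  rw [map_sub, aeval_charpoly_Smat_diagonal _ _ _ _ _ _ hd,
    aeval_charpoly_Smat_diagonal _ _ _ _ _ _ hd, ← mul_sub, mul_div_mul_left _ _ hprod]
  push_cast
  ring_nf

theorem aeval_charpoly_Smat_div_eq_neg_sum {M : ℕ} (K α : ℝ) (g e : ℕ → ℝ) (μ : ℂ)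
    (he : ∀ m ∈ range M, μ - 1 + e m ≠ 0) (hα : α = K * ∑ m ∈ range M, g m) :
    aeval μ (Smat (diagonal fun m : Fin M => 1 - e m) (fun _ => 1)
          (fun m => K * g m * (e m - 1)) α 0).charpoly /
        aeval μ ((Smat (diagonal fun m : Fin M => 1 - e m) (fun _ => 1)
          (fun m => K * g m * (e m - 1)) α 0).charpoly -
          (Smat (diagonal fun m : Fin M => 1 - e m) (fun _ => 1)
          (fun m => K * g m * (e m - 1)) α 1).charpoly) =
      (μ - 1) / -(K * μ * ∑ m ∈ range M, (g m : ℂ) / (μ - 1 + e m)) := by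
  have hden : ∀ m : ℕ, μ - ((1 - e m : ℝ) : ℂ) = μ - 1 + e m := fun m => by push_cast; ring
  rw [aeval_charpoly_Smat_diagonal_div _ _ _ _ _ fun m => hden m ▸ he m (mem_range.2 m.2),
    ← sum_mul_sub_one_div_sub_mul_sum (K : ℂ) μ (fun m => (g m : ℂ)) (fun m => (e m : ℂ)) M he, hα,
    Fin.sum_univ_eq_sum_range (fun m => ((1 : ℝ) : ℂ) * ((K * g m * (e m - 1) : ℝ) : ℂ) /
      (μ - ((1 - e m : ℝ) : ℂ)))]
  push_cast
  congr 3 with m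
  ring

/-- The summation index `m ∈ Finset.range M` stands for the paper's `m − 1`. -/
theorem stmt9_general (θ A l : ℝ) (hθ2 : θ < 2)
    (M : ℕ) (hM : 0 < M) (hl : 0 < l) (h : ℝ) (hh : h = l / Real.sqrt M)
    (D : Matrix (Fin M) (Fin M) ℝ)
    (hD : D = Matrix.diagonal fun m : Fin M => 1 - Real.exp (-(((m : ℝ) + 1/2) * h)))
    (b : Fin M → ℝ) (hb : b = fun _ => 1)
    (c : Fin M → ℝ)
    (hc : c = fun m : Fin M => A⁻¹ * (2 - θ) * h *
      Real.exp (-((2 - θ) * ((m : ℝ) + 1/2) * h)) * (Real.exp (-(((m : ℝ) + 1/2) * h)) - 1))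
    (α : ℝ)
    (hα : α = A⁻¹ * (2 - θ) * h *
      ((1 - Real.exp (-((2 - θ) * M * h))) / (1 - Real.exp (-((2 - θ) * h)))) *
      Real.exp (-((2 - θ) * h / 2)))
    (P Q : Polynomial ℝ)
    (hP : P = (Smat D b c α 0).charpoly)
    (hQ : Q = P - (Smat D b c α 1).charpoly)
    (μ : ℂ)
    (hpoles : ∀ m ∈ Finset.range M,
      μ - 1 + ((Real.exp (-(((m : ℝ) + 1/2) * h)) : ℝ) : ℂ) ≠ 0) :
    Polynomial.aeval μ P / Polynomial.aeval μ Q =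
      (A : ℂ) * (((θ : ℂ) - 2) * (h : ℂ) * ∑ m ∈ Finset.range M,
        ((Real.exp (-((2 - θ) * ((m : ℝ) + 1/2) * h)) : ℝ) : ℂ) /
          (μ - 1 + ((Real.exp (-(((m : ℝ) + 1/2) * h)) : ℝ) : ℂ)))⁻¹ * (μ - 1) / μ := by
  subst hD hb hc hP hQ
  have hh0 : h ≠ 0 := by
    rw [hh]; exact div_ne_zero hl.ne' (Real.sqrt_ne_zero'.2 (by exact_mod_cast hM))
  have hα' : α = A⁻¹ * (2 - θ) * h *
      ∑ m ∈ range M, Real.exp (-((2 - θ) * ((m : ℝ) + 1/2) * h)) := by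
    rw [hα, mul_assoc, sum_range_exp_midpoint _ _ (mul_ne_zero (sub_ne_zero.2 hθ2.ne') hh0)]
  rw [aeval_charpoly_Smat_div_eq_neg_sum (A⁻¹ * (2 - θ) * h) α
    (fun m => Real.exp (-((2 - θ) * ((m : ℝ) + 1/2) * h)))
    (fun m => Real.exp (-(((m : ℝ) + 1/2) * h)))
    μ hpoles hα']
  rw [show ((A⁻¹ * (2 - θ) * h : ℝ) : ℂ) = -((A : ℂ)⁻¹ * ((θ : ℂ) - 2) * h) by push_cast; ring]
  -- `ring` splits `(x * y)⁻¹` only into inverses of atoms, so `θ − 2` must become one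
  generalize (θ : ℂ) - 2 = t
  simp only [div_eq_mul_inv, mul_inv, neg_mul, neg_neg, inv_inv]
  ring

/-- The characteristic pair `P/Q` of the discretized corner algorithm coincides with
the rational function `Ψ^{(M)}(μ) = A·((θ−2)h·Σ_{m=1}^M e^{−(2−θ)(m−1/2)h}/(μ−1+e^{−(m−1/2)h}))⁻¹·(μ−1)/μ`
wherever both sides are defined. The summation index `m ∈ Finset.range M` represents
the paper's `m − 1` (so `(m − 1/2)h` becomes `(m + 1/2)h`). -/
theorem stmt9 (θ A l : ℝ) (hθ1 : 1 < θ) (hθ2 : θ < 2) (hA : 0 < A)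
    (M : ℕ) (hM : 0 < M) (hl : 0 < l) (h : ℝ) (hh : h = l / Real.sqrt M)
    (D : Matrix (Fin M) (Fin M) ℝ)
    (hD : D = Matrix.diagonal fun m : Fin M => 1 - Real.exp (-(((m : ℝ) + 1/2) * h)))
    (b : Fin M → ℝ) (hb : b = fun _ => 1)
    (c : Fin M → ℝ)
    (hc : c = fun m : Fin M => A⁻¹ * (2 - θ) * h *
      Real.exp (-((2 - θ) * ((m : ℝ) + 1/2) * h)) * (Real.exp (-(((m : ℝ) + 1/2) * h)) - 1))
    (α : ℝ)
    (hα : α = A⁻¹ * (2 - θ) * h *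
      ((1 - Real.exp (-((2 - θ) * M * h))) / (1 - Real.exp (-((2 - θ) * h)))) *
      Real.exp (-((2 - θ) * h / 2)))
    (P Q : Polynomial ℝ)
    (hP : P = (Smat D b c α 0).charpoly)
    (hQ : Q = P - (Smat D b c α 1).charpoly)
    (μ : ℂ) (hQμ : Polynomial.aeval μ Q ≠ 0) (hμ0 : μ ≠ 0)
    (hpoles : ∀ m ∈ Finset.range M,
      μ - 1 + ((Real.exp (-(((m : ℝ) + 1/2) * h)) : ℝ) : ℂ) ≠ 0)
    (hS : (∑ m ∈ Finset.range M,
      ((Real.exp (-((2 - θ) * ((m : ℝ) + 1/2) * h)) : ℝ) : ℂ) /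
        (μ - 1 + ((Real.exp (-(((m : ℝ) + 1/2) * h)) : ℝ) : ℂ))) ≠ 0) :
    Polynomial.aeval μ P / Polynomial.aeval μ Q =
      (A : ℂ) * (((θ : ℂ) - 2) * (h : ℂ) * ∑ m ∈ Finset.range M,
        ((Real.exp (-((2 - θ) * ((m : ℝ) + 1/2) * h)) : ℝ) : ℂ) /
          (μ - 1 + ((Real.exp (-(((m : ℝ) + 1/2) * h)) : ℝ) : ℂ)))⁻¹ * (μ - 1) / μ :=
  stmt9_general θ A l hθ2 M hM hl h hh D hD b hb c hc α hα P Q hP hQ μ hpoles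
end

section
/- There exists a constant C > 0 such that |f(e^{is}) − λ| ≥ C·(|s|^θ + λ) for all s ∈ [−π, π] and all λ ∈ [0, λ_max]. -/
/-!
Write `μ = e^{is}`. Since `e^{is} - 1 = 2 sin(s/2) e^{i(π+s)/2}`, the argument of `μ - 1` has
modulus `(π + |s|)/2`, so for small `s ≠ 0` the model value `z = -c (μ - 1)^θ` makes an angle at
least `(2 - θ)π/4` with the positive real axis. A point of such a sector is at distance
`≳ |z| + λ` from every `λ ≥ 0`; by the corner asymptotics `f(μ)` is a small relative perturbation
of `z`, and `|z| ≳ |s|^θ`. At `s = 0` the bound follows by continuity, and away from `s = 0` the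
quotient `|f(e^{is}) - λ| / (|s|^θ + λ)` is continuous and positive on a compact set, hence
bounded below.
-/

open Filter Topology Real

namespace Complex

lemma sqrt_mul_add_le_norm_sub_ofReal {z : ℂ} {γ lam : ℝ} (hγ : -1 ≤ γ) (hγ1 : γ < 1)
    (hlam : 0 ≤ lam) (hre : z.re ≤ γ * ‖z‖) : √((1 - γ) / 2) * (‖z‖ + lam) ≤ ‖z - lam‖ := by
  have hsq : ‖z - lam‖ ^ 2 = ‖z‖ ^ 2 - 2 * lam * z.re + lam ^ 2 := by
    simp only [Complex.sq_norm, normSq_apply, sub_re, sub_im, ofReal_re, ofReal_im]; ring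
  rw [← pow_le_pow_iff_left₀ (by positivity) (norm_nonneg _) two_ne_zero, mul_pow,
    sq_sqrt (by linarith), hsq]
  nlinarith [mul_nonneg (by linarith : 0 ≤ 1 + γ) (sq_nonneg (‖z‖ - lam)),
    mul_nonneg hlam (sub_nonneg.2 hre)]

lemma half_sqrt_mul_add_le_norm_sub_ofReal {z u : ℂ} {γ lam : ℝ} (hγ : -1 ≤ γ) (hγ1 : γ < 1)
    (hlam : 0 ≤ lam) (hre : z.re ≤ γ * ‖z‖) (hu : ‖u - z‖ ≤ √((1 - γ) / 2) / 2 * ‖z‖) :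
    √((1 - γ) / 2) / 2 * (‖z‖ + lam) ≤ ‖u - lam‖ := by
  have hz := sqrt_mul_add_le_norm_sub_ofReal hγ hγ1 hlam hre
  have htri := norm_sub_le_norm_sub_add_norm_sub z u lam
  rw [norm_sub_rev z u] at htri
  nlinarith [mul_nonneg (sqrt_nonneg ((1 - γ) / 2)) hlam]

lemma norm_sub_le_mul_norm_of_norm_div_sub_one_le {u z : ℂ} {η : ℝ} (hz : z ≠ 0)
    (h : ‖u / z - 1‖ ≤ η) : ‖u - z‖ ≤ η * ‖z‖ := by
  rw [show u - z = (u / z - 1) * z by field_simp, norm_mul]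
  exact mul_le_mul_of_nonneg_right h (norm_nonneg z)

lemma re_neg_ofReal_mul_cpow_le {w : ℂ} {c θ A : ℝ} (hc : 0 ≤ c) (hθ : 0 ≤ θ)
    (hA : θ * |arg w| ≤ A) (hAπ : A ≤ π) :
    (-(c : ℂ) * w ^ (θ : ℂ)).re ≤ -Real.cos A * ‖-(c : ℂ) * w ^ (θ : ℂ)‖ := by
  have hre : (-(c : ℂ) * w ^ (θ : ℂ)).re = -(c * (‖w‖ ^ θ * Real.cos (arg w * θ))) := by
    rw [neg_mul, neg_re, re_ofReal_mul, cpow_ofReal_re]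
  have hnorm : ‖-(c : ℂ) * w ^ (θ : ℂ)‖ = c * ‖w‖ ^ θ := by
    rw [norm_mul, norm_neg, norm_real, norm_cpow_real, Real.norm_of_nonneg hc]
  have hcos : Real.cos A ≤ Real.cos (arg w * θ) := by
    rw [← Real.cos_abs (arg w * θ)]
    refine Real.cos_le_cos_of_nonneg_of_le_pi (abs_nonneg _) hAπ ?_
    rwa [abs_mul, abs_of_nonneg hθ, mul_comm]
  rw [hre, hnorm]
  nlinarith [mul_nonneg hc (rpow_nonneg (norm_nonneg w) θ)]

lemma exp_I_mul_ofReal_sub_one (s : ℝ) :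
    exp (I * s) - 1 = (2 * Real.sin (s / 2) : ℝ) * exp (((π + s) / 2 : ℝ) * I) := by
  have hexp : exp (((π + s) / 2 : ℝ) * I) = I * exp (s / 2 * I) := by
    rw [show (((π + s) / 2 : ℝ) : ℂ) * I = π / 2 * I + s / 2 * I by push_cast; ring, exp_add,
      exp_pi_div_two_mul_I]
  have hsq : exp (I * s) = exp (s / 2 * I) ^ 2 := by rw [← exp_nat_mul]; ring_nf
  rw [hexp, hsq]
  push_cast
  rw [two_sin, neg_mul, exp_neg]
  field_simp
  linear_combination (exp (s * I / 2) ^ 2 - 1) * I_sq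

lemma arg_ofReal_mul_exp_mul_I {r φ : ℝ} (hr : 0 < r) (hφ : φ ∈ Set.Ioc (-π) π) :
    arg (r * exp (φ * I)) = φ := by
  rw [exp_mul_I]
  exact arg_mul_cos_add_sin_mul_I hr hφ

lemma abs_arg_exp_I_mul_ofReal_sub_one {s : ℝ} (h0 : s ≠ 0) (hs : |s| < π) :
    |arg (exp (I * s) - 1)| = (π + |s|) / 2 := by
  obtain ⟨hs₁, hs₂⟩ := abs_lt.1 hs
  rw [exp_I_mul_ofReal_sub_one]
  rcases h0.lt_or_gt with hneg | hpos
  · have hsin : Real.sin (s / 2) < 0 := sin_neg_of_neg_of_neg_pi_lt (by linarith) (by linarith)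
    have hflip : ((2 * Real.sin (s / 2) : ℝ) : ℂ) * exp (((π + s) / 2 : ℝ) * I)
        = ((-(2 * Real.sin (s / 2)) : ℝ) : ℂ) * exp (((s - π) / 2 : ℝ) * I) := by
      rw [show (((π + s) / 2 : ℝ) : ℂ) * I = ((s - π) / 2 : ℝ) * I + π * I by push_cast; ring,
        exp_add_pi_mul_I]
      push_cast
      ring
    rw [hflip, arg_ofReal_mul_exp_mul_I (by linarith) ⟨by linarith, by linarith⟩,
      abs_of_neg hneg, abs_of_neg (by linarith)]
    ring
  · have hsin : 0 < Real.sin (s / 2) := sin_pos_of_pos_of_lt_pi (by linarith) (by linarith)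
    rw [arg_ofReal_mul_exp_mul_I (by linarith) ⟨by linarith, by linarith⟩, abs_of_pos hpos,
      abs_of_pos (by linarith)]

lemma two_div_pi_mul_abs_le_norm_exp_I_mul_ofReal_sub_one {s : ℝ} (hs : |s| ≤ π) :
    2 / π * |s| ≤ ‖exp (I * s) - 1‖ := by
  have hs2 : |s / 2| ≤ π / 2 := by rw [abs_div, abs_two]; linarith
  rw [norm_exp_I_mul_ofReal_sub_one, norm_mul, Real.norm_two, Real.norm_eq_abs,
    abs_sin_eq_sin_abs_of_abs_le_pi (by linarith [pi_pos])]
  have := mul_le_sin (abs_nonneg (s / 2)) hs2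
  rw [abs_div, abs_two] at this ⊢
  linarith

lemma exp_I_mul_ofReal_ne_one {s : ℝ} (h0 : s ≠ 0) (hs : |s| ≤ π) : exp (I * s) ≠ 1 := by
  rw [← sub_ne_zero, ← norm_pos_iff]
  have := pi_pos
  exact (by positivity : 0 < 2 / π * |s|).trans_le
    (two_div_pi_mul_abs_le_norm_exp_I_mul_ofReal_sub_one hs)

lemma re_neg_ofReal_mul_exp_I_mul_sub_one_cpow_le {c θ s : ℝ} (hc : 0 ≤ c) (hθ0 : 0 ≤ θ)
    (h0 : s ≠ 0) (hs : |s| ≤ (2 - θ) * π / 4) :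
    (-(c : ℂ) * (exp (I * s) - 1) ^ (θ : ℂ)).re
      ≤ -Real.cos ((θ + 2) * π / 4) * ‖-(c : ℂ) * (exp (I * s) - 1) ^ (θ : ℂ)‖ := by
  have hπ := pi_pos
  refine re_neg_ofReal_mul_cpow_le hc hθ0 ?_ (by nlinarith [abs_nonneg s])
  rw [abs_arg_exp_I_mul_ofReal_sub_one h0 (by nlinarith [mul_nonneg hθ0 hπ.le])]
  nlinarith [abs_nonneg s]

lemma mul_rpow_abs_le_norm_neg_ofReal_mul_exp_I_mul_sub_one_cpow {c θ s : ℝ} (hc : 0 ≤ c)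
    (hθ0 : 0 ≤ θ) (hs : |s| ≤ π) :
    c * (2 / π) ^ θ * |s| ^ θ ≤ ‖-(c : ℂ) * (exp (I * s) - 1) ^ (θ : ℂ)‖ := by
  have := pi_pos
  rw [norm_mul, norm_neg, norm_real, norm_cpow_real, Real.norm_of_nonneg hc, mul_assoc,
    ← mul_rpow (by positivity) (abs_nonneg s)]
  gcongr
  exact two_div_pi_mul_abs_le_norm_exp_I_mul_ofReal_sub_one hs

end Complex

section

variable {θ c : ℝ} {f : ℂ → ℂ}

lemma continuous_comp_exp_I_mul (hcont : ContinuousOn f {μ : ℂ | ‖μ‖ = 1}) :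
    Continuous fun t : ℝ => f (Complex.exp (Complex.I * t)) :=
  hcont.comp_continuous (by fun_prop) Complex.norm_exp_I_mul_ofReal

lemma exists_bound_near_zero_of_ne_zero (hθ0 : 0 ≤ θ) (hθ2 : θ < 2) (hc : 0 < c)
    (hcorner : Tendsto (fun μ : ℂ => f μ / (-(c : ℂ) * (μ - 1) ^ (θ : ℂ)))
      (𝓝[{μ : ℂ | ‖μ‖ = 1} \ {1}] 1) (𝓝 1)) :
    ∃ C > 0, ∃ a > 0, ∀ s : ℝ, s ≠ 0 → |s| ≤ a → ∀ lam : ℝ, 0 ≤ lam →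
      C * (|s| ^ θ + lam) ≤ ‖f (Complex.exp (Complex.I * s)) - lam‖ := by
  have hπ := pi_pos
  set γ := -Real.cos ((θ + 2) * π / 4)
  have hγ : -1 ≤ γ := neg_le_neg (Real.cos_le_one _)
  have hγ1 : γ < 1 := by
    have := Real.cos_lt_cos_of_nonneg_of_le_pi (by positivity) le_rfl
      (by nlinarith : (θ + 2) * π / 4 < π)
    rw [Real.cos_pi] at this
    linarith
  set δ := √((1 - γ) / 2)
  have hδ : 0 < δ := sqrt_pos.2 (by linarith)
  obtain ⟨ε, hε, hball⟩ := Metric.tendsto_nhdsWithin_nhds.1 hcorner (δ / 2) (by positivity)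
  set K := min (c * (2 / π) ^ θ) 1
  refine ⟨δ / 2 * K, by positivity, min ((2 - θ) * π / 4) (ε / 2),
    lt_min (by nlinarith) (by positivity), fun s hs0 hsa lam hlam => ?_⟩
  have hsθ : |s| ≤ (2 - θ) * π / 4 := hsa.trans (min_le_left _ _)
  have hsε : |s| < ε := by linarith [hsa.trans (min_le_right _ _)]
  have hsπ : |s| ≤ π := by nlinarith [mul_nonneg hθ0 hπ.le]
  set μ := Complex.exp (Complex.I * s)
  set z := -(c : ℂ) * (μ - 1) ^ (θ : ℂ)
  have hz := Complex.mul_rpow_abs_le_norm_neg_ofReal_mul_exp_I_mul_sub_one_cpow hc.le hθ0 hsπ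
  have hz0 : z ≠ 0 := by
    rw [← norm_pos_iff]
    exact (by positivity : 0 < c * (2 / π) ^ θ * |s| ^ θ).trans_le hz
  have hμS : μ ∈ {μ : ℂ | ‖μ‖ = 1} \ {1} :=
    ⟨Complex.norm_exp_I_mul_ofReal s, Complex.exp_I_mul_ofReal_ne_one hs0 hsπ⟩
  have hdist : dist μ 1 < ε := by
    rw [Complex.dist_eq]
    exact Real.norm_exp_I_mul_ofReal_sub_one_le.trans_lt (by rwa [Real.norm_eq_abs])
  have hclose : ‖f μ - z‖ ≤ δ / 2 * ‖z‖ :=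
    Complex.norm_sub_le_mul_norm_of_norm_div_sub_one_le hz0
      (by simpa only [Complex.dist_eq] using (hball hμS hdist).le)
  have hlow : K * (|s| ^ θ + lam) ≤ ‖z‖ + lam := by
    have := rpow_nonneg (abs_nonneg s) θ
    nlinarith [min_le_left (c * (2 / π) ^ θ) 1, min_le_right (c * (2 / π) ^ θ) 1]
  calc δ / 2 * K * (|s| ^ θ + lam) ≤ δ / 2 * (‖z‖ + lam) := by
        rw [mul_assoc]; gcongr
    _ ≤ ‖f μ - lam‖ := Complex.half_sqrt_mul_add_le_norm_sub_ofReal hγ hγ1 hlam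
        (Complex.re_neg_ofReal_mul_exp_I_mul_sub_one_cpow_le hc.le hθ0 hs0 hsθ) hclose

lemma exists_bound_near_zero (hθ0 : 0 ≤ θ) (hθ2 : θ < 2) (hc : 0 < c)
    (hcont : ContinuousOn f {μ : ℂ | ‖μ‖ = 1})
    (hcorner : Tendsto (fun μ : ℂ => f μ / (-(c : ℂ) * (μ - 1) ^ (θ : ℂ)))
      (𝓝[{μ : ℂ | ‖μ‖ = 1} \ {1}] 1) (𝓝 1)) :
    ∃ C > 0, ∃ a > 0, ∀ s : ℝ, |s| ≤ a → ∀ lam : ℝ, 0 ≤ lam →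
      C * (|s| ^ θ + lam) ≤ ‖f (Complex.exp (Complex.I * s)) - lam‖ := by
  obtain ⟨C, hC, a, ha, hbound⟩ := exists_bound_near_zero_of_ne_zero hθ0 hθ2 hc hcorner
  refine ⟨C, hC, a, ha, fun s hsa lam hlam => ?_⟩
  rcases eq_or_ne s 0 with rfl | hs0
  · have hnear : ∀ᶠ t : ℝ in 𝓝[≠] 0,
        C * (|t| ^ θ + lam) ≤ ‖f (Complex.exp (Complex.I * t)) - lam‖ := by
      filter_upwards [self_mem_nhdsWithin,
        nhdsWithin_le_nhds (Metric.closedBall_mem_nhds (0 : ℝ) ha)] with t ht0 hta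
      exact hbound t ht0 (by simpa using hta) lam hlam
    have hlhs : Continuous fun t : ℝ => C * (|t| ^ θ + lam) := by
      have := continuous_rpow_const hθ0
      fun_prop
    have hrhs : Continuous fun t : ℝ => ‖f (Complex.exp (Complex.I * t)) - lam‖ :=
      ((continuous_comp_exp_I_mul hcont).sub continuous_const).norm
    exact le_of_tendsto_of_tendsto (hlhs.tendsto 0 |>.mono_left nhdsWithin_le_nhds)
      (hrhs.tendsto 0 |>.mono_left nhdsWithin_le_nhds) hnear
  · exact hbound s hs0 hsa lam hlam

lemma exists_bound_away_from_zero {lmax : ℝ} (hθ0 : 0 ≤ θ)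
    (hcont : ContinuousOn f {μ : ℂ | ‖μ‖ = 1})
    (havoid : ∀ μ : ℂ, ‖μ‖ = 1 → μ ≠ 1 → ∀ x : ℝ, 0 ≤ x → x ≤ lmax → f μ ≠ (x : ℂ))
    {a : ℝ} (ha : 0 < a) :
    ∃ C > 0, ∀ s ∈ Set.Icc (-π) π, a ≤ |s| → ∀ lam ∈ Set.Icc (0 : ℝ) lmax,
      C * (|s| ^ θ + lam) ≤ ‖f (Complex.exp (Complex.I * s)) - lam‖ := by
  set T : Set (ℝ × ℝ) := (Set.Icc (-π) π ∩ {s | a ≤ |s|}) ×ˢ Set.Icc 0 lmax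
  have hT : IsCompact T :=
    (isCompact_Icc.inter_right (isClosed_le continuous_const continuous_abs)).prod isCompact_Icc
  have hden : ∀ p ∈ T, 0 < |p.1| ^ θ + p.2 := fun p hp =>
    add_pos_of_pos_of_nonneg (rpow_pos_of_pos (ha.trans_le hp.1.2) θ) hp.2.1
  have hratio : ContinuousOn
      (fun p : ℝ × ℝ => ‖f (Complex.exp (Complex.I * p.1)) - p.2‖ / (|p.1| ^ θ + p.2)) T := by
    have hnum : Continuous fun p : ℝ × ℝ => ‖f (Complex.exp (Complex.I * p.1)) - p.2‖ :=
      (((continuous_comp_exp_I_mul hcont).comp continuous_fst).sub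
        (Complex.continuous_ofReal.comp continuous_snd)).norm
    have := continuous_rpow_const hθ0
    exact hnum.continuousOn.div (by fun_prop) fun p hp => (hden p hp).ne'
  have hpos : ∀ p ∈ T, 0 < ‖f (Complex.exp (Complex.I * p.1)) - p.2‖ / (|p.1| ^ θ + p.2) := by
    rintro p hp
    have hp0 : p.1 ≠ 0 := abs_pos.1 (ha.trans_le hp.1.2)
    refine div_pos (norm_pos_iff.2 (sub_ne_zero.2 ?_)) (hden p hp)
    exact havoid _ (Complex.norm_exp_I_mul_ofReal _)
      (Complex.exp_I_mul_ofReal_ne_one hp0 (abs_le.2 hp.1.1)) p.2 hp.2.1 hp.2.2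
  obtain ⟨C, hC, hCle⟩ := hT.exists_forall_le' hratio hpos
  exact ⟨C, hC, fun s hs has lam hlam =>
    (le_div_iff₀ (hden (s, lam) ⟨⟨hs, has⟩, hlam⟩)).1 (hCle (s, lam) ⟨⟨hs, has⟩, hlam⟩)⟩

end

theorem stmt14_general (θ c lmax : ℝ) (hθ0 : 0 ≤ θ) (hθ2 : θ < 2) (hc : 0 < c)
    (f : ℂ → ℂ)
    (hcont : ContinuousOn f {μ : ℂ | ‖μ‖ = 1})
    (hcorner : Tendsto (fun μ : ℂ => f μ / (-(c : ℂ) * (μ - 1) ^ (θ : ℂ)))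
      (𝓝[{μ : ℂ | ‖μ‖ = 1} \ {1}] 1) (𝓝 1))
    (havoid : ∀ μ : ℂ, ‖μ‖ = 1 → μ ≠ 1 →
      ∀ x : ℝ, 0 ≤ x → x ≤ lmax → f μ ≠ (x : ℂ)) :
    ∃ C : ℝ, 0 < C ∧ ∀ s ∈ Set.Icc (-Real.pi) Real.pi, ∀ lam ∈ Set.Icc (0 : ℝ) lmax,
      C * (|s| ^ θ + lam) ≤ ‖f (Complex.exp (Complex.I * s)) - (lam : ℂ)‖ := by
  obtain ⟨C₁, hC₁, a, ha, hnear⟩ := exists_bound_near_zero hθ0 hθ2 hc hcont hcorner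
  obtain ⟨C₂, hC₂, hfar⟩ := exists_bound_away_from_zero hθ0 hcont havoid ha
  refine ⟨min C₁ C₂, lt_min hC₁ hC₂, fun s hs lam hlam => ?_⟩
  have hnn : 0 ≤ |s| ^ θ + lam := add_nonneg (rpow_nonneg (abs_nonneg s) θ) hlam.1
  rcases le_total |s| a with hsa | has
  · exact (mul_le_mul_of_nonneg_right (min_le_left _ _) hnn).trans (hnear s hsa lam hlam.1)
  · exact (mul_le_mul_of_nonneg_right (min_le_right _ _) hnn).trans (hfar s hs has lam hlam)

/-- If `f` is continuous on the unit circle, `f(μ) = −c·(μ−1)^θ·(1+o(1))` as `μ → 1`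
along the circle with `θ ∈ [0,2)`, and `f(μ) ∉ [0, λ_max]` for `μ ≠ 1` on the circle,
then there is `C > 0` with `|f(e^{is}) − λ| ≥ C·(|s|^θ + λ)` for all `s ∈ [−π,π]`,
`λ ∈ [0, λ_max]`. -/
theorem stmt14 (θ c lmax : ℝ) (hθ0 : 0 ≤ θ) (hθ2 : θ < 2) (hc : 0 < c) (hlmax : 0 < lmax)
    (f : ℂ → ℂ)
    (hcont : ContinuousOn f {μ : ℂ | ‖μ‖ = 1})
    (hcorner : Tendsto (fun μ : ℂ => f μ / (-(c : ℂ) * (μ - 1) ^ (θ : ℂ)))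
      (𝓝[{μ : ℂ | ‖μ‖ = 1} \ {1}] 1) (𝓝 1))
    (havoid : ∀ μ : ℂ, ‖μ‖ = 1 → μ ≠ 1 →
      ∀ x : ℝ, 0 ≤ x → x ≤ lmax → f μ ≠ (x : ℂ)) :
    ∃ C : ℝ, 0 < C ∧ ∀ s ∈ Set.Icc (-Real.pi) Real.pi, ∀ lam ∈ Set.Icc (0 : ℝ) lmax,
      C * (|s| ^ θ + lam) ≤ ‖f (Complex.exp (Complex.I * s)) - (lam : ℂ)‖ :=
  stmt14_general θ c lmax hθ0 hθ2 hc f hcont hcorner havoid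
end

section
/- Ψ is injective on the set {μ ∈ ℂ : |μ| > 1} ∪ {∞} if and only if −1 < q_0/q_1 ≤ (1−β)/(3+β). -/
open Filter Topology OnePoint

/-- The rational map `Ψ(μ) = (μ−1)(μ−β)/(q₀+q₁μ)` regarded as a self-map of the
Riemann sphere `ℂ ∪ {∞}`: the pole `μ = −q₀/q₁` is sent to `∞`, and `Ψ(∞) = ∞`
(the numerator has degree 2 and the denominator degree 1). -/
noncomputable def psiSphere (β q0 q1 : ℝ) : OnePoint ℂ → OnePoint ℂ :=
  fun x => Option.elim x ∞ fun μ =>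
    if (q0 : ℂ) + q1 * μ = 0 then ∞
    else (((μ - 1) * (μ - β) / ((q0 : ℂ) + q1 * μ) : ℂ) : OnePoint ℂ)

/-!
Write `t = q₀/q₁` and `w = μ + t`. Then `q₁ Ψ(μ) = w + c/w - (1 + 2t + β)` with
`c = (1 + t)(t + β)`, so two distinct finite points `μ ≠ ν` have the same image exactly when
`(μ + t)(ν + t) = c`, i.e. when `ν = c/(μ + t) - t`. Injectivity on `{|μ| > 1} ∪ {∞}` thus fails
if the pole `-t` lies in the domain (`|t| > 1`), and otherwise holds iff the Möbius involution
`μ ↦ c/(μ + t) - t` maps `{|μ| > 1}` into the closed unit disc. Comparing `|c - t w|²` with `|w|²`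
on `|w - t| > 1` reduces this to a real quadratic inequality whose boundary case is
`(3 + β) t = 1 - β`, attained at `μ = -1`; beyond it a small vertical perturbation of `μ = -1`
gives a colliding pair.
-/

open Complex

lemma psiSphere_coe (β q0 q1 : ℝ) (μ : ℂ) :
    psiSphere β q0 q1 μ = if (q0 : ℂ) + q1 * μ = 0 then ∞
      else (((μ - 1) * (μ - β) / ((q0 : ℂ) + q1 * μ) : ℂ) : OnePoint ℂ) := rfl

lemma psiSphere_eq_map_comp (β q0 q1 : ℝ) (hq1 : q1 ≠ 0) :
    psiSphere β q0 q1 = OnePoint.map (· / (q1 : ℂ)) ∘ psiSphere β (q0 / q1) 1 := by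
  have hq1' : (q1 : ℂ) ≠ 0 := ofReal_ne_zero.mpr hq1
  have hden (μ : ℂ) : (q0 : ℂ) + q1 * μ = q1 * (((q0 / q1 : ℝ) : ℂ) + ((1 : ℝ) : ℂ) * μ) := by
    push_cast; field_simp
  funext x
  induction x using OnePoint.rec with
  | infty => rfl
  | coe μ =>
    simp only [Function.comp_apply, psiSphere_coe, hden, mul_eq_zero, hq1', false_or]
    split_ifs
    · rfl
    · rw [OnePoint.map_some, div_div, mul_comm (q1 : ℂ)]

lemma add_ne_zero_of_one_lt_norm {t : ℝ} (ht : |t| ≤ 1) {μ : ℂ} (hμ : 1 < ‖μ‖) : μ + t ≠ 0 := by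
  intro h0
  rw [add_eq_zero_iff_eq_neg.mp h0, norm_neg, norm_real, Real.norm_eq_abs] at hμ
  linarith

lemma normSq_eq_div_of_mul_add_eq {a t w ν : ℂ} (hw : w ≠ 0) (h : w * (ν + t) = a) :
    normSq ν = normSq (a - t * w) / normSq w := by
  rw [← map_div₀]
  congr 1
  field_simp
  linear_combination h

section Normalized

variable {β t : ℝ}

def joukowskiConst (β t : ℝ) : ℝ := (1 + t) * (t + β)

lemma psiSphere_one_coe {μ : ℂ} (h : μ + t ≠ 0) :
    psiSphere β t 1 μ = (((μ - 1) * (μ - β) / (μ + t) : ℂ) : OnePoint ℂ) := by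
  rw [psiSphere_coe, ofReal_one, one_mul, add_comm (t : ℂ), if_neg h]

lemma psiSphere_one_coe_neg : psiSphere β t 1 (-t : ℂ) = ∞ := by
  rw [psiSphere_coe, ofReal_one, one_mul, add_neg_cancel, if_pos rfl]

lemma psiSphere_one_coe_eq_coe_iff {μ ν : ℂ} (hμ : μ + t ≠ 0) (hν : ν + t ≠ 0) :
    psiSphere β t 1 μ = psiSphere β t 1 ν ↔ μ = ν ∨ (μ + t) * (ν + t) = joukowskiConst β t := by
  have key : (μ - 1) * (μ - β) * (ν + t) - (ν - 1) * (ν - β) * (μ + t)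
      = (μ - ν) * ((μ + t) * (ν + t) - joukowskiConst β t) := by
    simp only [joukowskiConst]; push_cast; ring
  rw [psiSphere_one_coe hμ, psiSphere_one_coe hν, OnePoint.coe_eq_coe, div_eq_div_iff hμ hν,
    ← sub_eq_zero, key, mul_eq_zero, sub_eq_zero, sub_eq_zero]

lemma normSq_sub_mul_lt_normSq (hβ1 : -1 < β) (hβ2 : β < 1) (ht1 : -1 < t)
    (ht2 : (3 + β) * t ≤ 1 - β) {w : ℂ} (hw : 1 < normSq (w - t)) :
    normSq (joukowskiConst β t - t * w) < normSq w := by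
  simp only [normSq_apply, sub_re, sub_im, mul_re, mul_im, ofReal_re, ofReal_im,
    zero_mul, sub_zero, zero_sub, add_zero, joukowskiConst] at hw ⊢
  set x := w.re
  set y := w.im
  have ht : t < 1 := by nlinarith
  have h1t : 0 < 1 + t := by linarith
  have h1b : 0 < 1 + β := by linarith
  suffices h : 0 < x ^ 2 + y ^ 2 - (((1 + t) * (t + β) - t * x) ^ 2 + (t * y) ^ 2) by linarith
  -- away from the strip `|x - t| ≤ 1` the `y`-free part is a product of two factors of equal sign
  have hfactor : x ^ 2 + y ^ 2 - (((1 + t) * (t + β) - t * x) ^ 2 + (t * y) ^ 2)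
      = (1 + t) * ((x - (t + β)) * ((1 - t) * x + (1 + t) * (t + β))) + (1 - t ^ 2) * y ^ 2 := by
    ring
  have hy : 0 ≤ (1 - t ^ 2) * y ^ 2 := mul_nonneg (by nlinarith) (sq_nonneg y)
  rcases lt_or_ge x (t - 1) with hx | hx
  · rw [hfactor]
    exact add_pos_of_pos_of_nonneg
      (mul_pos h1t (mul_pos_of_neg_of_neg (by linarith) (by nlinarith))) hy
  rcases lt_or_ge (t + 1) x with hx' | hx'
  · rw [hfactor]
    exact add_pos_of_pos_of_nonneg (mul_pos h1t (mul_pos (by linarith) (by nlinarith))) hy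
  -- on the strip `|x - t| ≤ 1` use `y ^ 2 > 1 - (x - t) ^ 2`: what remains is linear in `x`
  -- and nonnegative at both ends `x = t ± 1`
  have hstrip : 2 * (x ^ 2 + y ^ 2 - (((1 + t) * (t + β) - t * x) ^ 2 + (t * y) ^ 2))
      = 2 * (1 - t ^ 2) * ((x - t) ^ 2 + y ^ 2 - 1)
        + (t + 1 - x) * ((1 + t) * (1 + β) * ((1 - β) - (3 + β) * t))
        + (x - t + 1) * ((1 + t) ^ 2 * (1 - β ^ 2)) := by
    ring
  have hdisc : 0 < (1 - t ^ 2) * ((x - t) ^ 2 + y ^ 2 - 1) := mul_pos (by nlinarith) (by linarith)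
  have hleft : 0 ≤ (t + 1 - x) * ((1 + t) * (1 + β) * ((1 - β) - (3 + β) * t)) :=
    mul_nonneg (by linarith) (mul_nonneg (mul_nonneg h1t.le h1b.le) (by linarith))
  have hright : 0 ≤ (x - t + 1) * ((1 + t) ^ 2 * (1 - β ^ 2)) :=
    mul_nonneg (by linarith) (mul_nonneg (sq_nonneg _) (by nlinarith))
  linarith

lemma exists_normSq_lt_normSq_sub_mul (hβ1 : -1 < β) (ht1 : -1 < t) (hT : 1 - β < (3 + β) * t) :
    ∃ w : ℂ, w ≠ 0 ∧ w ^ 2 ≠ joukowskiConst β t ∧ 1 < normSq (w - t) ∧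
      normSq w < normSq (joukowskiConst β t - t * w) := by
  -- perturb `w = t - 1` (i.e. `μ = -1`, on the unit circle) into `|μ| > 1`
  set A := (1 + t) * (1 + β) * ((3 + β) * t - (1 - β))
  have hA : 0 < A := mul_pos (mul_pos (by linarith) (by linarith)) (by linarith)
  set y := √A / 2
  have hy : 0 < y := by positivity
  have hy2 : y ^ 2 = A / 4 := by rw [div_pow, Real.sq_sqrt hA.le]; norm_num
  have hc : joukowskiConst β t - (t - 1) ^ 2 = (3 + β) * t - (1 - β) := by
    unfold joukowskiConst; ring
  refine ⟨⟨t - 1, y⟩, fun h => hy.ne' (congrArg im h), fun h => ?_, ?_, ?_⟩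
  · have hre := congrArg re h
    simp only [sq, mul_re, ofReal_re] at hre
    nlinarith
  · simp only [normSq_apply, sub_re, sub_im, ofReal_re, ofReal_im]
    nlinarith
  · simp only [normSq_apply, sub_re, sub_im, mul_re, mul_im, ofReal_re, ofReal_im]
    unfold joukowskiConst at hc ⊢
    nlinarith

lemma not_one_lt_norm_of_mul_eq (hβ1 : -1 < β) (hβ2 : β < 1) (ht1 : -1 < t)
    (ht2 : (3 + β) * t ≤ 1 - β) {μ ν : ℂ} (hμ : 1 < ‖μ‖)
    (h : (μ + t) * (ν + t) = joukowskiConst β t) : ¬ 1 < ‖ν‖ := by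
  have hw : μ + t ≠ 0 := add_ne_zero_of_one_lt_norm (abs_le.mpr ⟨ht1.le, by nlinarith⟩) hμ
  have hμt : 1 < normSq (μ + t - t) := by
    rwa [add_sub_cancel_right, one_lt_normSq_iff]
  rw [← one_lt_normSq_iff, not_lt, normSq_eq_div_of_mul_add_eq hw h,
    div_le_one (normSq_pos.mpr hw)]
  exact (normSq_sub_mul_lt_normSq hβ1 hβ2 ht1 ht2 hμt).le

lemma exists_ne_mul_eq (hβ1 : -1 < β) (ht1 : -1 < t) (hT : 1 - β < (3 + β) * t) :
    ∃ μ ν : ℂ, 1 < ‖μ‖ ∧ 1 < ‖ν‖ ∧ μ ≠ ν ∧ (μ + t) * (ν + t) = joukowskiConst β t := by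
  obtain ⟨w, hw, hw2, hμ, hν⟩ := exists_normSq_lt_normSq_sub_mul hβ1 ht1 hT
  have hprod : w * (joukowskiConst β t / w - t + t) = joukowskiConst β t := by field_simp; ring
  refine ⟨w - t, joukowskiConst β t / w - t, ?_, ?_, fun h => hw2 ?_, ?_⟩
  · rwa [← one_lt_normSq_iff]
  · rwa [← one_lt_normSq_iff, normSq_eq_div_of_mul_add_eq hw hprod,
      one_lt_div (normSq_pos.mpr hw)]
  · rw [sub_left_inj] at h
    rw [sq, ← hprod, sub_add_cancel, ← h]
  · rwa [sub_add_cancel]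

lemma not_injOn_psiSphere_one_of_one_lt_abs (h : 1 < |t|) :
    ¬ Set.InjOn (psiSphere β t 1)
        ({(∞ : OnePoint ℂ)} ∪ ((fun μ : ℂ => (μ : OnePoint ℂ)) '' {μ : ℂ | 1 < ‖μ‖})) := by
  intro hinj
  have hmem : (1 : ℝ) < ‖(-t : ℂ)‖ := by rwa [norm_neg, norm_real, Real.norm_eq_abs]
  exact infty_ne_coe _ <| hinj (Or.inl rfl) (Or.inr ⟨_, hmem, rfl⟩)
    (by rw [psiSphere_one_coe_neg]; rfl)

lemma not_injOn_psiSphere_one_of_lt (hβ1 : -1 < β) (ht1 : -1 < t)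
    (hT : 1 - β < (3 + β) * t) :
    ¬ Set.InjOn (psiSphere β t 1)
        ({(∞ : OnePoint ℂ)} ∪ ((fun μ : ℂ => (μ : OnePoint ℂ)) '' {μ : ℂ | 1 < ‖μ‖})) := by
  intro hinj
  obtain ⟨μ, ν, hμ, hν, hne, h⟩ := exists_ne_mul_eq hβ1 ht1 hT
  have hc : (joukowskiConst β t : ℂ) ≠ 0 :=
    ofReal_ne_zero.mpr (mul_pos (by linarith) (by nlinarith)).ne'
  rw [← h] at hc
  have hval := (psiSphere_one_coe_eq_coe_iff (β := β) (left_ne_zero_of_mul hc)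
    (right_ne_zero_of_mul hc)).mpr (Or.inr h)
  exact hne (coe_injective (hinj (Or.inr ⟨μ, hμ, rfl⟩) (Or.inr ⟨ν, hν, rfl⟩) hval))

lemma injOn_psiSphere_one (hβ1 : -1 < β) (hβ2 : β < 1) (ht1 : -1 < t)
    (ht2 : (3 + β) * t ≤ 1 - β) :
    Set.InjOn (psiSphere β t 1)
        ({(∞ : OnePoint ℂ)} ∪ ((fun μ : ℂ => (μ : OnePoint ℂ)) '' {μ : ℂ | 1 < ‖μ‖})) := by
  have hpole {μ : ℂ} (hμ : 1 < ‖μ‖) : μ + t ≠ 0 :=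
    add_ne_zero_of_one_lt_norm (abs_le.mpr ⟨ht1.le, by nlinarith⟩) hμ
  rintro _ (rfl | ⟨μ, hμ, rfl⟩) _ (rfl | ⟨ν, hν, rfl⟩) h
  · rfl
  · rw [psiSphere_one_coe (hpole hν)] at h
    exact (infty_ne_coe _ h).elim
  · rw [psiSphere_one_coe (hpole hμ)] at h
    exact (coe_ne_infty _ h).elim
  · rcases (psiSphere_one_coe_eq_coe_iff (hpole hμ) (hpole hν)).mp h with rfl | h
    · rfl
    · exact (not_one_lt_norm_of_mul_eq hβ1 hβ2 ht1 ht2 hμ h hν).elim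

theorem injOn_psiSphere_one_iff (hβ1 : -1 < β) (hβ2 : β < 1) (ht : t ≠ -1) :
    Set.InjOn (psiSphere β t 1)
        ({(∞ : OnePoint ℂ)} ∪ ((fun μ : ℂ => (μ : OnePoint ℂ)) '' {μ : ℂ | 1 < ‖μ‖})) ↔
      (-1 < t ∧ t ≤ (1 - β) / (3 + β)) := by
  rw [le_div_iff₀ (by linarith), mul_comm]
  constructor
  · intro hinj
    have habs : |t| ≤ 1 := not_lt.mp fun h => not_injOn_psiSphere_one_of_one_lt_abs h hinj
    have ht1 : -1 < t := lt_of_le_of_ne (abs_le.mp habs).1 ht.symm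
    exact ⟨ht1, not_lt.mp fun hT => not_injOn_psiSphere_one_of_lt hβ1 ht1 hT hinj⟩
  · rintro ⟨ht1, ht2⟩
    exact injOn_psiSphere_one hβ1 hβ2 ht1 ht2

end Normalized

/-- For `β ∈ (−1,1)`, `q₁ ≠ 0`, `q₀ ≠ −q₁`, the map `Ψ` is injective on
`{μ : |μ| > 1} ∪ {∞}` iff `−1 < q₀/q₁ ≤ (1−β)/(3+β)`. -/
theorem stmt19 (β q0 q1 : ℝ) (hβ1 : -1 < β) (hβ2 : β < 1) (hq1 : q1 ≠ 0)
    (hq0 : q0 ≠ -q1) :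
    Set.InjOn (psiSphere β q0 q1)
        ({(∞ : OnePoint ℂ)} ∪ ((fun μ : ℂ => (μ : OnePoint ℂ)) ''
          {μ : ℂ | 1 < ‖μ‖})) ↔
      (-1 < q0 / q1 ∧ q0 / q1 ≤ (1 - β) / (3 + β)) := by
  have ht : q0 / q1 ≠ -1 := by rwa [ne_eq, div_eq_iff hq1, neg_one_mul]
  have hmap : Function.Injective (OnePoint.map (· / (q1 : ℂ))) :=
    Option.map_injective fun _ _ => (div_left_inj' (ofReal_ne_zero.mpr hq1)).mp
  rw [psiSphere_eq_map_comp β q0 q1 hq1, ← injOn_psiSphere_one_iff hβ1 hβ2 ht]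
  exact ⟨Set.InjOn.of_comp, hmap.comp_injOn⟩
end
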